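/- For an algebraic curvature tensor of 'Riemann type N' — i.e., the only nonvanishing frame components are the boost-weight −2 components R_{1i1j} — every scalar monomial of degree ≥ 2 formed by contracting copies of R with the metric vanishes; in particular the order-k Lovelock tensor G^{a(k)}_c = −(1/2^{k+1}) δ^{a a_1b_1…}_{c c_1d_1…} R^{c_1d_1}_{a_1b_1}…R^{c_kd_k}_{a_kb_k} vanishes for all k ≥ 2. -/
import Mathlib


/-- Kronecker delta over an `N`-element index set. -/
noncomputable def kron {N : ℕ} (a b : Fin N) : ℝ := if a = b then 1 else 0

/-- Generalized Kronecker delta of order `p`: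
`δ^{a_1…a_p}_{b_1…b_p} = det (δ^{a_i}_{b_j})`. -/
noncomputable def gdelta {N p : ℕ} (a b : Fin p → Fin N) : ℝ :=
  Matrix.det (Matrix.of fun i j => kron (a i) (b j))

lemma gdelta_swap {N p : ℕ} (u low : Fin p → Fin N) {x y : Fin p} (h : x ≠ y) :
    gdelta (u ∘ Equiv.swap x y) low = -gdelta u low := by
  unfold gdelta
  have h2 : (Matrix.of fun i j => kron ((u ∘ Equiv.swap x y) i) (low j))
      = (Matrix.of fun i j => kron (u i) (low j)).submatrix (Equiv.swap x y) id := rfl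
  rw [h2, Matrix.det_permute, Equiv.Perm.sign_swap h]
  norm_num

lemma inner_sum_zero {N k : ℕ} (hk : 2 ≤ k) (ℓ : Fin N → ℝ)
    (Q : Fin N → Fin N → Fin N → ℝ) (e : Fin N)
    (lower : Fin (k + k + 1) → Fin N) (c d : Fin k → Fin N) (t : Finset (Fin k)) :
    ∑ w : Fin (k + k) → Fin N,
      gdelta (Fin.cons e w) lower *
        ((∏ i ∈ t, ℓ (w (Fin.castAdd k i)) * Q (c i) (d i) (w (Fin.natAdd k i))) *
          ∏ i ∈ Finset.univ \ t, -(ℓ (w (Fin.natAdd k i)) * Q (c i) (d i) (w (Fin.castAdd k i)))) = 0 := by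
  classical
  set i0 : Fin k := ⟨0, by omega⟩ with hi0
  set i1 : Fin k := ⟨1, by omega⟩ with hi1
  have h01 : i0 ≠ i1 := by simp [hi0, hi1, Fin.ext_iff]
  set sl : Fin k → Fin (k + k) := fun i => if i ∈ t then Fin.castAdd k i else Fin.natAdd k i with hsl
  set ol : Fin k → Fin (k + k) := fun i => if i ∈ t then Fin.natAdd k i else Fin.castAdd k i with hol
  have slinj : ∀ i j, sl i = sl j → i = j := by
    intro i j h
    have hv := congrArg Fin.val h
    have hi' := i.isLt; have hj' := j.isLt
    by_cases hi : i ∈ t <;> by_cases hj : j ∈ t <;>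
      simp only [hsl, hi, hj, if_true, if_false, Fin.coe_castAdd, Fin.coe_natAdd] at hv <;>
      exact Fin.ext (by omega)
  have holne : ∀ i j, ol i ≠ sl j := by
    intro i j h
    have hv := congrArg Fin.val h
    have hi' := i.isLt; have hj' := j.isLt
    by_cases hi : i ∈ t <;> by_cases hj : j ∈ t <;>
      simp only [hsl, hol, hi, hj, if_true, if_false, Fin.coe_castAdd, Fin.coe_natAdd] at hv
    · omega
    · have : i = j := Fin.ext (by omega)
      subst this; exact hj hi
    · have : i = j := Fin.ext (by omega)
      subst this; exact hi hj
    · omega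
  set s0 := sl i0 with hs0
  set s1 := sl i1 with hs1
  have hsne : s0 ≠ s1 := fun h => h01 (slinj _ _ h)
  set τ := Equiv.swap s0 s1 with hτ
  have hτsl : ∀ i, τ (sl i) = sl (Equiv.swap i0 i1 i) := by
    intro i
    rcases eq_or_ne i i0 with rfl | h0
    · rw [hτ, ← hs0, Equiv.swap_apply_left, Equiv.swap_apply_left, hs1]
    rcases eq_or_ne i i1 with rfl | h1
    · rw [hτ, ← hs1, Equiv.swap_apply_right, Equiv.swap_apply_right, hs0]
    · rw [hτ, Equiv.swap_apply_of_ne_of_ne (hs0 ▸ fun h => h0 (slinj _ _ h))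
          (hs1 ▸ fun h => h1 (slinj _ _ h)), Equiv.swap_apply_of_ne_of_ne h0 h1]
  have hτol : ∀ i, τ (ol i) = ol i := fun i => by
    rw [hτ]
    exact Equiv.swap_apply_of_ne_of_ne (hs0 ▸ holne i i0) (hs1 ▸ holne i i1)
  set E : ℝ := ∏ i : Fin k, (if i ∈ t then (1 : ℝ) else -1) with hE
  have hw : ∀ w : Fin (k + k) → Fin N,
      (∏ i ∈ t, ℓ (w (Fin.castAdd k i)) * Q (c i) (d i) (w (Fin.natAdd k i))) *
        (∏ i ∈ Finset.univ \ t, -(ℓ (w (Fin.natAdd k i)) * Q (c i) (d i) (w (Fin.castAdd k i))))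
      = E * ((∏ i : Fin k, ℓ (w (sl i))) * ∏ i : Fin k, Q (c i) (d i) (w (ol i))) := by
    intro w
    have key : ∀ i : Fin k,
        (if i ∈ t then ℓ (w (Fin.castAdd k i)) * Q (c i) (d i) (w (Fin.natAdd k i))
          else -(ℓ (w (Fin.natAdd k i)) * Q (c i) (d i) (w (Fin.castAdd k i))))
        = (if i ∈ t then (1 : ℝ) else -1) * (ℓ (w (sl i)) * Q (c i) (d i) (w (ol i))) := by
      intro i
      by_cases h : i ∈ t <;> simp [hsl, hol, h]
    have e1 : (∏ i ∈ t, ℓ (w (Fin.castAdd k i)) * Q (c i) (d i) (w (Fin.natAdd k i)))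
        = ∏ i ∈ t, (if i ∈ t then ℓ (w (Fin.castAdd k i)) * Q (c i) (d i) (w (Fin.natAdd k i))
            else -(ℓ (w (Fin.natAdd k i)) * Q (c i) (d i) (w (Fin.castAdd k i)))) :=
      Finset.prod_congr rfl fun i hi => (if_pos hi).symm
    have e2 : (∏ i ∈ Finset.univ \ t, -(ℓ (w (Fin.natAdd k i)) * Q (c i) (d i) (w (Fin.castAdd k i))))
        = ∏ i ∈ Finset.univ \ t, (if i ∈ t then ℓ (w (Fin.castAdd k i)) * Q (c i) (d i) (w (Fin.natAdd k i))
            else -(ℓ (w (Fin.natAdd k i)) * Q (c i) (d i) (w (Fin.castAdd k i)))) :=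
      Finset.prod_congr rfl fun i hi => (if_neg (Finset.mem_sdiff.mp hi).2).symm
    rw [e1, e2, mul_comm, Finset.prod_sdiff (Finset.subset_univ t)]
    rw [Finset.prod_congr rfl fun i _ => key i, Finset.prod_mul_distrib, Finset.prod_mul_distrib]
  simp only [hw]
  set F : (Fin (k + k) → Fin N) → ℝ := fun w =>
    gdelta (Fin.cons e w) lower *
      (E * ((∏ i : Fin k, ℓ (w (sl i))) * ∏ i : Fin k, Q (c i) (d i) (w (ol i)))) with hF
  have hswap : ∀ w : Fin (k + k) → Fin N, F (w ∘ τ) = -F w := by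
    intro w
    have hQ' : ∀ i, (w ∘ τ) (ol i) = w (ol i) := fun i => by
      simp only [Function.comp_apply, hτol i]
    have hL' : (∏ i : Fin k, ℓ ((w ∘ τ) (sl i))) = ∏ i : Fin k, ℓ (w (sl i)) := by
      rw [Finset.prod_congr rfl fun i _ => by
        rw [Function.comp_apply, hτsl i]]
      exact Equiv.prod_comp (Equiv.swap i0 i1) (fun i => ℓ (w (sl i)))
    have hdet : gdelta (Fin.cons e (w ∘ τ)) lower = -gdelta (Fin.cons e w) lower := by
      have hcons : Fin.cons e (w ∘ τ) = (Fin.cons e w) ∘ (Equiv.swap s0.succ s1.succ) := by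
        funext x
        refine Fin.cases ?_ (fun j => ?_) x
        · have h0 : Equiv.swap s0.succ s1.succ (0 : Fin (k + k + 1)) = 0 :=
            Equiv.swap_apply_of_ne_of_ne (Ne.symm (Fin.succ_ne_zero s0)) (Ne.symm (Fin.succ_ne_zero s1))
          simp [h0]
        · have hj : Equiv.swap s0.succ s1.succ j.succ = (τ j).succ := by
            rcases eq_or_ne j s0 with rfl | h0
            · rw [Equiv.swap_apply_left, hτ, Equiv.swap_apply_left]
            rcases eq_or_ne j s1 with rfl | h1
            · rw [Equiv.swap_apply_right, hτ, Equiv.swap_apply_right]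
            · rw [Equiv.swap_apply_of_ne_of_ne (by simp [Fin.succ_inj, h0]) (by simp [Fin.succ_inj, h1]),
                hτ, Equiv.swap_apply_of_ne_of_ne h0 h1]
          simp [hj, Fin.cons_succ]
      have hne : s0.succ ≠ s1.succ := fun h => hsne (Fin.succ_injective _ h)
      rw [hcons]
      exact gdelta_swap (Fin.cons e w) lower hne
    rw [hF]
    simp only [hQ', hL', hdet]
    ring
  have hbij : ∀ w : Fin (k + k) → Fin N, (w ∘ τ) ∘ τ = w := by
    intro w; funext x
    exact congrArg w (by rw [hτ]; exact Equiv.swap_apply_self _ _ _)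
  let eqv : (Fin (k + k) → Fin N) ≃ (Fin (k + k) → Fin N) :=
    ⟨fun w => w ∘ τ, fun w => w ∘ τ, hbij, hbij⟩
  have h1 : ∑ w : Fin (k + k) → Fin N, F (w ∘ τ) = ∑ w : Fin (k + k) → Fin N, F w :=
    Equiv.sum_comp eqv F
  have h2 : ∑ w : Fin (k + k) → Fin N, F (w ∘ τ) = -∑ w : Fin (k + k) → Fin N, F w := by
    rw [Finset.sum_congr rfl fun w _ => hswap w, Finset.sum_neg_distrib]
  have : ∑ w : Fin (k + k) → Fin N, F w = 0 := by linarith [h1, h2]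
  exact this

lemma dsum {N : ℕ} (A B : Fin N → ℝ) (c : ℝ) :
    ∑ p, ∑ q, A p * B q * c = (∑ p, A p) * (∑ q, B q) * c := by
  rw [Finset.sum_mul_sum, Finset.sum_mul]
  exact Finset.sum_congr rfl fun p _ => by rw [Finset.sum_mul]

lemma dsum' {N : ℕ} (A B : Fin N → ℝ) (c : ℝ) :
    ∑ p, ∑ q, A q * B p * c = (∑ p, A p) * (∑ q, B q) * c := by
  rw [Finset.sum_comm]
  exact dsum A B c

def appendEquiv (N k : ℕ) : (Fin (k + k) → Fin N) ≃ (Fin k → Fin N) × (Fin k → Fin N) where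
  toFun w := (fun i => w (Fin.castAdd k i), fun i => w (Fin.natAdd k i))
  invFun p := Fin.append p.1 p.2
  left_inv w := by
    funext x
    refine Fin.addCases (fun i => ?_) (fun i => ?_) x
    · exact Fin.append_left _ _ i
    · exact Fin.append_right _ _ i
  right_inv p := by
    refine Prod.ext ?_ ?_ <;> funext i
    · exact Fin.append_left _ _ i
    · exact Fin.append_right _ _ i

lemma merge_sum {N k : ℕ} (G : (Fin k → Fin N) → (Fin k → Fin N) → ℝ) :
    (∑ a : Fin k → Fin N, ∑ b : Fin k → Fin N, G a b)
      = ∑ w : Fin (k + k) → Fin N, G (fun i => w (Fin.castAdd k i)) (fun i => w (Fin.natAdd k i)) := by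
  rw [← Fintype.sum_prod_type']
  exact (Equiv.sum_comp (appendEquiv N k) (fun p => G p.1 p.2)).symm

/-- For an algebraic curvature tensor of Riemann type N, i.e.
`R_{abcd} = ℓ_a ℓ_c S_{bd} - ℓ_a ℓ_d S_{bc} - ℓ_b ℓ_c S_{ad} + ℓ_b ℓ_d S_{ac}`
with `S` symmetric, `ℓ` null and `S` transverse to `ℓ` (w.r.t. the inverse
metric), the order-`k` Lovelock tensor
`G^{a(k)}_c = -(1/2^{k+1}) δ^{a a₁b₁…}_{c c₁d₁…} R^{c₁d₁}_{a₁b₁}…R^{c_kd_k}_{a_kb_k}`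
vanishes for all `k ≥ 2` (indices of `R` raised with the inverse metric). -/
theorem typeN_lovelock_vanishes (N k : ℕ) (hk : 2 ≤ k)
    (gInv : Fin N → Fin N → ℝ) (ℓ : Fin N → ℝ) (S : Fin N → Fin N → ℝ)
    (hgSym : ∀ p q, gInv p q = gInv q p)
    (hSsym : ∀ p q, S p q = S q p)
    (hnull : ∑ p, ∑ q, gInv p q * ℓ p * ℓ q = 0)
    (htrans : ∀ d, ∑ p, ∑ q, gInv p q * ℓ p * S q d = 0)
    (Rdown : Fin N → Fin N → Fin N → Fin N → ℝ)
    (hTypeN : ∀ p q r s, Rdown p q r s =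
      ℓ p * ℓ r * S q s - ℓ p * ℓ s * S q r - ℓ q * ℓ r * S p s + ℓ q * ℓ s * S p r)
    (Rmix : Fin N → Fin N → Fin N → Fin N → ℝ)
    (hRmix : ∀ u v r s, Rmix u v r s =
      ∑ p, ∑ q, gInv u p * gInv v q * Rdown p q r s) :
    ∀ e f : Fin N,
      -(1 / 2 ^ (k + 1) : ℝ) *
        ∑ a : Fin k → Fin N, ∑ b : Fin k → Fin N,
        ∑ c : Fin k → Fin N, ∑ d : Fin k → Fin N,
          gdelta (Fin.cons e (Fin.append a b)) (Fin.cons f (Fin.append c d)) *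
            ∏ i : Fin k, Rmix (c i) (d i) (a i) (b i)
        = 0 := by
  intro e f
  refine mul_eq_zero_of_right _ ?_
  classical
  set L : Fin N → ℝ := fun u => ∑ p, gInv u p * ℓ p with hLdef
  set T : Fin N → Fin N → ℝ := fun u s => ∑ q, gInv u q * S q s with hTdef
  have hL : ∀ u, L u = ∑ p, gInv u p * ℓ p := fun u => by rw [hLdef]
  have hT : ∀ u s, T u s = ∑ q, gInv u q * S q s := fun u s => by rw [hTdef]
  set Q : Fin N → Fin N → Fin N → ℝ := fun u v s => L u * T v s - L v * T u s with hQdef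
  have hR : ∀ u v r s, Rmix u v r s = ℓ r * Q u v s - ℓ s * Q u v r := by
    intro u v r s
    rw [hRmix]
    have e1 : ∀ p : Fin N, ∀ q : Fin N, gInv u p * gInv v q * Rdown p q r s =
        (gInv u p * ℓ p) * (gInv v q * S q s) * ℓ r
        - (gInv u p * ℓ p) * (gInv v q * S q r) * ℓ s
        - ((gInv v q * ℓ q) * (gInv u p * S p s) * ℓ r
        - (gInv v q * ℓ q) * (gInv u p * S p r) * ℓ s) := by
      intro p q; rw [hTypeN]; ring
    rw [Finset.sum_congr rfl fun p _ => Finset.sum_congr rfl fun q _ => e1 p q]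
    simp only [Finset.sum_sub_distrib]
    rw [dsum, dsum, dsum' (fun q => gInv v q * ℓ q) (fun p => gInv u p * S p s),
      dsum' (fun q => gInv v q * ℓ q) (fun p => gInv u p * S p r)]
    rw [← hL u, ← hL v, ← hT u s, ← hT v s, ← hT u r, ← hT v r]
    simp only [hQdef]
    ring
  have happ : ∀ w : Fin (k + k) → Fin N,
      Fin.append (fun i => w (Fin.castAdd k i)) (fun i => w (Fin.natAdd k i)) = w :=
    fun w => (appendEquiv N k).left_inv w
  refine Eq.trans (merge_sum (fun a b => ∑ c : Fin k → Fin N, ∑ d : Fin k → Fin N,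
      gdelta (Fin.cons e (Fin.append a b)) (Fin.cons f (Fin.append c d)) *
        ∏ i : Fin k, Rmix (c i) (d i) (a i) (b i))) ?_
  simp only [happ]
  rw [Finset.sum_comm]
  refine Finset.sum_eq_zero fun c _ => ?_
  rw [Finset.sum_comm]
  refine Finset.sum_eq_zero fun d _ => ?_
  simp only [hR, sub_eq_add_neg, Finset.prod_add, Finset.mul_sum]
  rw [Finset.sum_comm]
  refine Finset.sum_eq_zero fun t _ => ?_
  exact inner_sum_zero hk ℓ Q e (Fin.cons f (Fin.append c d)) c d t
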